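/- Let D be a monotone bipartite digraph with parts V_1, V_2 (arcs directed from V_1 to V_2). The labeling assigning p to every vertex of V_1 and 1 to every vertex of V_2, where p = max{⌊d(u)/d(v)⌋ + 1 : v ∈ V_2, u ∈ N(v)}, is a topological additive p-numbering of D. -/

import Mathlib

open Finset

/-- Neighborhood of `v` in the underlying undirected graph of the digraph `A`. -/
def nbr {V : Type} [Fintype V] [DecidableEq V] (A : V → V → Prop) [DecidableRel A] (v : V) :
    Finset V := Finset.univ.filter fun w => A v w ∨ A w v

/-- `S(v) = Σ_{w ∈ N(v)} f(w)`. -/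
def Svert {V : Type} [Fintype V] [DecidableEq V] (A : V → V → Prop) [DecidableRel A]
    (f : V → ℕ) (v : V) : ℕ := ∑ w ∈ nbr A v, f w

/-- `f` is a topological additive numbering: positive labels with `S(u) < S(v)` on every arc. -/
def IsTAN {V : Type} [Fintype V] [DecidableEq V] (A : V → V → Prop) [DecidableRel A]
    (f : V → ℕ) : Prop := (∀ v, 1 ≤ f v) ∧ ∀ u v, A u v → Svert A f u < Svert A f v

/-- The digraph `A` is acyclic. -/
def Acyclic {V : Type} (A : V → V → Prop) : Prop := ∀ v, ¬ Relation.TransGen A v v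

/-- The topological additive number `η_t(D)`. -/
noncomputable def etat {V : Type} [Fintype V] [DecidableEq V] (A : V → V → Prop) [DecidableRel A] : ℕ :=
  sInf {k | ∃ f, IsTAN A f ∧ ∀ v, f v ≤ k}

/-!
On an arc `(u, v)` every neighbour of `u` lies in `V₂` and every neighbour of `v` in `V₁`, so
the labelling gives `S(u) = d(u)` and `S(v) = p · d(v)`. Since `p ≥ ⌊d(u)/d(v)⌋ + 1` and
`d(v) ≥ 1`, we get `d(u) < (⌊d(u)/d(v)⌋ + 1) · d(v) ≤ p · d(v)`.
-/

section MonotoneBipartite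

variable {V : Type} [Fintype V] [DecidableEq V] {A : V → V → Prop} [DecidableRel A]
  {V1 V2 : Finset V}

theorem mem_nbr {v w : V} : w ∈ nbr A v ↔ A v w ∨ A w v := by
  simp [nbr]

theorem disjoint_nbr_of_mem_left (hdisj : Disjoint V1 V2)
    (harcs : ∀ u v, A u v → u ∈ V1 ∧ v ∈ V2) {u : V} (hu : u ∈ V1) :
    Disjoint (nbr A u) V1 := by
  refine Finset.disjoint_left.mpr fun w hw hw1 => ?_
  rcases mem_nbr.mp hw with h | h
  · exact Finset.disjoint_left.mp hdisj hw1 (harcs u w h).2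
  · exact Finset.disjoint_left.mp hdisj hu (harcs w u h).2

theorem nbr_subset_left_of_mem_right (hdisj : Disjoint V1 V2)
    (harcs : ∀ u v, A u v → u ∈ V1 ∧ v ∈ V2) {v : V} (hv : v ∈ V2) :
    nbr A v ⊆ V1 := by
  intro w hw
  rcases mem_nbr.mp hw with h | h
  · exact absurd hv (Finset.disjoint_left.mp hdisj (harcs v w h).1)
  · exact (harcs w v h).1

end MonotoneBipartite

section TwoValuedLabelling

variable {V : Type} [Fintype V] [DecidableEq V] (A : V → V → Prop) [DecidableRel A]
  (V1 : Finset V) (a b : ℕ)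

theorem svert_ite_of_disjoint {v : V} (h : Disjoint (nbr A v) V1) :
    Svert A (fun x => if x ∈ V1 then a else b) v = (nbr A v).card * b :=
  Finset.sum_const_nat fun _ hw => if_neg (Finset.disjoint_left.mp h hw)

theorem svert_ite_of_subset {v : V} (h : nbr A v ⊆ V1) :
    Svert A (fun x => if x ∈ V1 then a else b) v = (nbr A v).card * a :=
  Finset.sum_const_nat fun _ hw => if_pos (h hw)

end TwoValuedLabelling

section DegreeRatio

variable {V : Type} [Fintype V] [DecidableEq V] (A : V → V → Prop) [DecidableRel A]
  (V2 : Finset V)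

/-- The paper's `p = max {⌊d(u)/d(v)⌋ + 1 : v ∈ V₂, u ∈ N(v)}`; it is `0` when the set is empty. -/
noncomputable def maxDegRatio : ℕ :=
  sSup {m : ℕ | ∃ v ∈ V2, ∃ u ∈ nbr A v, m = (nbr A u).card / (nbr A v).card + 1}

theorem bddAbove_degRatio :
    BddAbove {m : ℕ | ∃ v ∈ V2, ∃ u ∈ nbr A v, m = (nbr A u).card / (nbr A v).card + 1} := by
  refine ⟨Fintype.card V + 1, ?_⟩
  rintro m ⟨v, -, u, -, rfl⟩
  have := (Nat.div_le_self (nbr A u).card (nbr A v).card).trans (Finset.card_le_univ _)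
  omega

variable {A V2}

theorem div_card_nbr_add_one_le_maxDegRatio {u v : V} (hv : v ∈ V2) (hu : u ∈ nbr A v) :
    (nbr A u).card / (nbr A v).card + 1 ≤ maxDegRatio A V2 :=
  le_csSup (bddAbove_degRatio A V2) ⟨v, hv, u, hu, rfl⟩

theorem card_nbr_lt_maxDegRatio_mul {u v : V} (hv : v ∈ V2) (hu : u ∈ nbr A v) :
    (nbr A u).card < (nbr A v).card * maxDegRatio A V2 :=
  calc (nbr A u).card
      < (nbr A v).card * ((nbr A u).card / (nbr A v).card + 1) :=
        Nat.lt_mul_div_succ _ (Finset.card_pos.mpr ⟨u, hu⟩)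
    _ ≤ (nbr A v).card * maxDegRatio A V2 :=
        Nat.mul_le_mul_left _ (div_card_nbr_add_one_le_maxDegRatio hv hu)

end DegreeRatio

theorem stmt_7_general {V : Type} [Fintype V] [DecidableEq V] (A : V → V → Prop) [DecidableRel A]
    (V1 V2 : Finset V) (hdisj : Disjoint V1 V2)
    (harcs : ∀ u v, A u v → u ∈ V1 ∧ v ∈ V2)
    (hne : ∃ u v, A u v)
    (p : ℕ)
    (hp : p = sSup {m : ℕ | ∃ v ∈ V2, ∃ u ∈ nbr A v,
      m = (nbr A u).card / (nbr A v).card + 1}) :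
    IsTAN A (fun x => if x ∈ V1 then p else 1) ∧
    (∀ x, (if x ∈ V1 then p else 1) ≤ p) := by
  change p = maxDegRatio A V2 at hp
  subst hp
  have hp_pos : 1 ≤ maxDegRatio A V2 := by
    obtain ⟨u, v, huv⟩ := hne
    exact le_add_self.trans
      (div_card_nbr_add_one_le_maxDegRatio (harcs u v huv).2 (mem_nbr.mpr (Or.inr huv)))
  refine ⟨⟨fun x => ?_, fun u v huv => ?_⟩, fun x => ?_⟩
  · dsimp only
    split_ifs <;> omega
  · obtain ⟨hu, hv⟩ := harcs u v huv
    rw [svert_ite_of_disjoint A V1 _ _ (disjoint_nbr_of_mem_left hdisj harcs hu),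
      svert_ite_of_subset A V1 _ _ (nbr_subset_left_of_mem_right hdisj harcs hv), mul_one]
    exact card_nbr_lt_maxDegRatio_mul hv (mem_nbr.mpr (Or.inr huv))
  · split_ifs <;> omega

/-- the labeling `p` on `V1` and `1` on `V2` is a topological additive
`p`-numbering of a monotone bipartite digraph. -/
theorem stmt_7 {V : Type} [Fintype V] [DecidableEq V] (A : V → V → Prop) [DecidableRel A]
    (V1 V2 : Finset V) (hdisj : Disjoint V1 V2) (hcover : V1 ∪ V2 = Finset.univ)
    (harcs : ∀ u v, A u v → u ∈ V1 ∧ v ∈ V2)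
    (hbip : ∀ u v, (A u v ∨ A v u) → (u ∈ V1 ∧ v ∈ V2) ∨ (u ∈ V2 ∧ v ∈ V1))
    (hne : ∃ u v, A u v)
    (p : ℕ)
    (hp : p = sSup {m : ℕ | ∃ v ∈ V2, ∃ u ∈ nbr A v,
      m = (nbr A u).card / (nbr A v).card + 1}) :
    IsTAN A (fun x => if x ∈ V1 then p else 1) ∧
    (∀ x, (if x ∈ V1 then p else 1) ≤ p) :=
  stmt_7_general A V1 V2 hdisj harcs hne p hp
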